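/- arXiv:1904.09638 — 4 statements merged into one kernel-verified Lean document; each statement's English description precedes it below -/
import Mathlib

section
/- Let θ ∈ (0,1) and α, λ, β be real numbers satisfying the three equations: (i) -θ/6 = (α-β)·√((1-θ²)/3) + (α²-αβ)·θ, (ii) √3·α + √3/(6(α-λ)) = θ/√(1-θ²) with α ≠ λ, (iii) -√3·λ - √3/(12(α-λ)) = √(1-θ²)/θ. Then the equation -√(1-θ²)/6 = -(√3/3)·(2α-λ-β)·θ + (αλ+αβ-2λβ)·√(1-θ²) fails; i.e., the four equations are jointly inconsistent. -/
/-!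
Write `s = √(1 - θ²)` and `t = √3`. Clearing denominators in (ii) and (iii) and adding
`θ/6` times the first to `s/6` times the second leaves `(α - λ)` times
`t θ s (α - 2λ) = θ² + 2s²`, so this relation holds since `α ≠ λ`. Fed into the fourth
equation together with `t² = 3` and `s² = 1 - θ²`, it forces `α = β`, and then (i)
reads `-θ/6 = 0`.
-/

open Real

namespace HopfHypersurface

variable {θ α lam β s t : ℝ}

theorem second_equation_cleared (hs : s ≠ 0) (hd : α - lam ≠ 0)
    (h : t * α + t / (6 * (α - lam)) = θ / s) :
    6 * t * α * (α - lam) * s + t * s = 6 * θ * (α - lam) := by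
  field_simp at h
  linear_combination h

theorem third_equation_cleared (hθ : θ ≠ 0) (hd : α - lam ≠ 0)
    (h : -t * lam - t / (12 * (α - lam)) = s / θ) :
    -(12 * t * lam * θ * (α - lam)) - t * θ = 12 * s * (α - lam) := by
  field_simp at h
  linear_combination h

theorem mul_sub_two_mul_eq (hd : α - lam ≠ 0)
    (h2 : 6 * t * α * (α - lam) * s + t * s = 6 * θ * (α - lam))
    (h3 : -(12 * t * lam * θ * (α - lam)) - t * θ = 12 * s * (α - lam)) :
    t * θ * s * (α - 2 * lam) = θ ^ 2 + 2 * s ^ 2 :=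
  mul_left_cancel₀ hd (by linear_combination (θ / 6) * h2 + (s / 6) * h3)

theorem eq_of_fourth_equation (ht : t ^ 2 = 3) (hs : s ^ 2 = 1 - θ ^ 2)
    (h2 : 6 * t * α * (α - lam) * s + t * s = 6 * θ * (α - lam))
    (hrel : t * θ * s * (α - 2 * lam) = θ ^ 2 + 2 * s ^ 2)
    (h4 : -s / 6 = -(t / 3) * (2 * α - lam - β) * θ + (α * lam + α * β - 2 * lam * β) * s) :
    α = β := by
  linear_combination (t * θ / 2) * h4 - ((α - β) / 2) * hrel + (θ / 12) * h2
    - (θ ^ 2 * (2 * α - lam - β) / 6) * ht - (α - β) * hs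

end HopfHypersurface

open HopfHypersurface in
theorem stmt_0 (θ α lam β : ℝ) (hθ0 : 0 < θ) (hθ1 : θ < 1)
    (hal : α ≠ lam)
    (h1 : -θ/6 = (α - β) * Real.sqrt ((1 - θ^2)/3) + (α^2 - α*β) * θ)
    (h2 : Real.sqrt 3 * α + Real.sqrt 3 / (6*(α - lam)) = θ / Real.sqrt (1 - θ^2))
    (h3 : -Real.sqrt 3 * lam - Real.sqrt 3 / (12*(α - lam)) = Real.sqrt (1 - θ^2) / θ) :
    ¬ (-Real.sqrt (1 - θ^2)/6 =
        -(Real.sqrt 3/3) * (2*α - lam - β) * θ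
        + (α*lam + α*β - 2*lam*β) * Real.sqrt (1 - θ^2)) := by
  intro h4
  have hpos : 0 < 1 - θ ^ 2 := by nlinarith
  have hd : α - lam ≠ 0 := sub_ne_zero.2 hal
  have P2 := second_equation_cleared (Real.sqrt_pos.2 hpos).ne' hd h2
  have P3 := third_equation_cleared hθ0.ne' hd h3
  have hαβ : α = β := eq_of_fourth_equation (Real.sq_sqrt (by norm_num)) (Real.sq_sqrt hpos.le) P2
    (mul_sub_two_mul_eq hd P2 P3) h4
  rw [hαβ] at h1
  linarith
end

section
/- Let θ ∈ (0,1), let α be a real number, and suppose λ, β are real numbers satisfying θ = 4√3(α-λ)√(1-θ²) + 12λ(λ-α)θ and θ = 4√3(α-β)√(1-θ²) + 12β(β-α)θ with λ ≠ β, and additionally -√(1-θ²) = 2√3·θ(2α-λ-β) + 6(αλ+αβ-2λβ)√(1-θ²). Then λ + β = (3αθ + √(3(1-θ²)))/(3θ), λβ = (4α√(3(1-θ²)) - θ)/(12θ), and α·(α√(1-θ²) + (2θ²-1)/(√3·θ)) = 0; hence α = 0 or α = (1-2θ²)/(θ√(3(1-θ²))). -/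
/-!
The first two equations say that `λ` and `β` are two distinct roots of the quadratic
`12θ x² - (12αθ + 4√3 √(1-θ²)) x + (4√3 √(1-θ²) α - θ)`, so Vieta's formulas give `λ + β` and `λβ`.
Substituting these into the third leaves an equation in `α` alone, which factors as
`α (√3 θ √(1-θ²) α + 2θ² - 1) = 0`.
-/

theorem add_mul_eq_of_quadratic_eq_zero {R : Type*} [CommRing R] [IsDomain R] {a b c x y : R}
    (hxy : x ≠ y) (hx : a * x ^ 2 + b * x + c = 0) (hy : a * y ^ 2 + b * y + c = 0) :
    a * (x + y) = -b ∧ a * (x * y) = c := by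
  have hxy' : x - y ≠ 0 := sub_ne_zero.mpr hxy
  constructor
  · have h : (x - y) * (a * (x + y) + b) = 0 := by linear_combination hx - hy
    linear_combination (mul_eq_zero.mp h).resolve_left hxy'
  · have h : (x - y) * (a * (x * y) - c) = 0 := by linear_combination y * hx - x * hy
    linear_combination (mul_eq_zero.mp h).resolve_left hxy'

theorem stmt_3 (θ α lam β : ℝ) (hθ0 : 0 < θ) (hθ1 : θ < 1) (hlb : lam ≠ β)
    (h1 : θ = 4*Real.sqrt 3*(α - lam)*Real.sqrt (1 - θ^2) + 12*lam*(lam - α)*θ)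
    (h2 : θ = 4*Real.sqrt 3*(α - β)*Real.sqrt (1 - θ^2) + 12*β*(β - α)*θ)
    (h3 : -Real.sqrt (1 - θ^2) = 2*Real.sqrt 3*θ*(2*α - lam - β)
          + 6*(α*lam + α*β - 2*lam*β)*Real.sqrt (1 - θ^2)) :
    lam + β = (3*α*θ + Real.sqrt (3*(1 - θ^2)))/(3*θ) ∧
    lam*β = (4*α*Real.sqrt (3*(1 - θ^2)) - θ)/(12*θ) ∧
    α * (α*Real.sqrt (1 - θ^2) + (2*θ^2 - 1)/(Real.sqrt 3*θ)) = 0 ∧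
    (α = 0 ∨ α = (1 - 2*θ^2)/(θ*Real.sqrt (3*(1 - θ^2)))) := by
  set s := Real.sqrt (1 - θ^2)
  set r := Real.sqrt 3
  have hθs : 0 < 1 - θ^2 := by nlinarith
  have hs : s^2 = 1 - θ^2 := Real.sq_sqrt hθs.le
  have hr : r^2 = 3 := Real.sq_sqrt (by norm_num)
  have hs0 : s ≠ 0 := (Real.sqrt_pos.mpr hθs).ne'
  have hr0 : r ≠ 0 := (Real.sqrt_pos.mpr (by norm_num : (0:ℝ) < 3)).ne'
  have hrs : Real.sqrt (3*(1 - θ^2)) = r * s := Real.sqrt_mul (by norm_num) _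
  obtain ⟨hsum, hprod⟩ := add_mul_eq_of_quadratic_eq_zero (a := 12*θ)
    (b := -(12*α*θ + 4*r*s)) (c := 4*r*s*α - θ) hlb (by linear_combination -h1)
    (by linear_combination -h2)
  have hα : α * (α*s*r*θ + 2*θ^2 - 1) = 0 := by
    linear_combination (-(r*θ/6))*h3 + (-r*(α*s - r*θ/3)/12)*hsum + (r*s/6)*hprod
      + (α*r^2/3)*hs + (α*(1 - 2*θ^2)/3 + θ*s*r/9)*hr
  rw [hrs]
  refine ⟨?_, ?_, ?_, ?_⟩
  · field_simp; linear_combination hsum / 4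
  · field_simp; linear_combination hprod
  · field_simp; linear_combination hα
  · refine (mul_eq_zero.mp hα).imp id fun h => ?_
    field_simp
    linear_combination h
end

section
/- On S³×S³ define P on tangent vectors Z = (U,V) at (p,q) by PZ = (pq⁻¹V, qp⁻¹U), and J by JZ = (1/√3)(2pq⁻¹V - U, -2qp⁻¹U + V). Then P² = Id and P anticommutes with J: P(JZ) = -J(PZ) for all tangent Z. -/
noncomputable def nkJ (p q : Quaternion ℝ) (Z : Quaternion ℝ × Quaternion ℝ) :
    Quaternion ℝ × Quaternion ℝ :=
  (Real.sqrt 3)⁻¹ • (2 • (p * q⁻¹ * Z.2) - Z.1, -(2 • (q * p⁻¹ * Z.1)) + Z.2)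

noncomputable def nkP (p q : Quaternion ℝ) (Z : Quaternion ℝ × Quaternion ℝ) :
    Quaternion ℝ × Quaternion ℝ :=
  (p * q⁻¹ * Z.2, q * p⁻¹ * Z.1)

/-! Both structures depend on `(p, q)` only through `a = p q⁻¹`, because `q p⁻¹ = a⁻¹`.
In terms of `a`, `P` is the twisted swap `(U, V) ↦ (a V, a⁻¹ U)`, and both identities are
formal consequences of `a a⁻¹ = a⁻¹ a = 1`: no property of the quaternions or of `1/√3`
beyond this enters. -/

section TwistedSwap

variable {R : Type*} [DivisionRing R]

def twistedSwap (a : R) (Z : R × R) : R × R :=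
  (a * Z.2, a⁻¹ * Z.1)

def twistedJ {𝕜 : Type*} [SMul 𝕜 R] (c : 𝕜) (a : R) (Z : R × R) : R × R :=
  c • (2 • (a * Z.2) - Z.1, -(2 • (a⁻¹ * Z.1)) + Z.2)

theorem twistedSwap_involutive {a : R} (ha : a ≠ 0) : Function.Involutive (twistedSwap a) := by
  rintro ⟨U, V⟩
  simp [twistedSwap, ha]

theorem twistedSwap_smul {𝕜 : Type*} [SMul 𝕜 R] [SMulCommClass 𝕜 R R] (a : R) (c : 𝕜)
    (Z : R × R) :
    twistedSwap a (c • Z) = c • twistedSwap a Z := by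
  simp [twistedSwap, mul_smul_comm]

theorem twistedSwap_twistedJ {𝕜 : Type*} [Monoid 𝕜] [DistribMulAction 𝕜 R] [SMulCommClass 𝕜 R R]
    {a : R} (ha : a ≠ 0) (c : 𝕜) (Z : R × R) :
    twistedSwap a (twistedJ c a Z) = -twistedJ c a (twistedSwap a Z) := by
  obtain ⟨U, V⟩ := Z
  rw [twistedJ, twistedJ, twistedSwap_smul, ← smul_neg c]
  congr 1
  simp only [twistedSwap, mul_add, mul_sub, mul_neg, mul_smul_comm, ← mul_assoc,
    mul_inv_cancel₀ ha, inv_mul_cancel₀ ha, one_mul, Prod.neg_mk, Prod.mk.injEq]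
  constructor <;> abel

end TwistedSwap

theorem nkP_eq_twistedSwap (p q : Quaternion ℝ) : nkP p q = twistedSwap (p * q⁻¹) := by
  funext Z
  simp [nkP, twistedSwap, mul_inv_rev]

theorem nkJ_eq_twistedJ (p q : Quaternion ℝ) : nkJ p q = twistedJ (Real.sqrt 3)⁻¹ (p * q⁻¹) := by
  funext Z
  simp [nkJ, twistedJ, mul_inv_rev]

theorem stmt_11 (p q : Quaternion ℝ) (hp : ‖p‖ = 1) (hq : ‖q‖ = 1)
    (Z : Quaternion ℝ × Quaternion ℝ) :
    nkP p q (nkP p q Z) = Z ∧ nkP p q (nkJ p q Z) = -(nkJ p q (nkP p q Z)) := by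
  have ha : p * q⁻¹ ≠ 0 := by
    have hp0 : p ≠ 0 := norm_ne_zero_iff.mp (by simp [hp])
    have hq0 : q ≠ 0 := norm_ne_zero_iff.mp (by simp [hq])
    simp [hp0, hq0]
  rw [nkP_eq_twistedSwap, nkJ_eq_twistedJ]
  exact ⟨twistedSwap_involutive ha Z, twistedSwap_twistedJ ha _ Z⟩
end

section
/- On S³×S³ with the almost product structure P given by PZ = (pq⁻¹V, qp⁻¹U) for Z = (U,V) at (p,q), and J as in the homogeneous nearly Kähler structure, the product structure Q defined by QZ = (-U, V) satisfies QZ = (1/√3)(2PJZ - JZ) for all tangent vectors Z, and Q² = Id. -/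
def nkQ (Z : Quaternion ℝ × Quaternion ℝ) : Quaternion ℝ × Quaternion ℝ :=
  (-Z.1, Z.2)

lemma mul_inv_mul_mul_inv_self {G₀ : Type*} [GroupWithZero G₀] {a b : G₀} (ha : a ≠ 0)
    (hb : b ≠ 0) : a * b⁻¹ * (b * a⁻¹) = 1 := by
  rw [← mul_assoc, inv_mul_cancel_right₀ hb, mul_inv_cancel₀ ha]

lemma inv_sqrt_three_mul_three : (Real.sqrt 3)⁻¹ * 3 = Real.sqrt 3 := by
  rw [inv_mul_eq_div, div_eq_iff (by positivity), Real.mul_self_sqrt (by norm_num)]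

/- Since (pq⁻¹)(qp⁻¹) = 1, the off-diagonal terms of 2PJZ - JZ cancel and the diagonal ones
sum to 3(√3)⁻¹ QZ = √3 QZ. -/
lemma two_smul_nkP_nkJ_sub_nkJ {p q : Quaternion ℝ} (hp : p ≠ 0) (hq : q ≠ 0)
    (Z : Quaternion ℝ × Quaternion ℝ) :
    2 • nkP p q (nkJ p q Z) - nkJ p q Z = Real.sqrt 3 • nkQ Z := by
  rw [← congrArg (· • nkQ Z) inv_sqrt_three_mul_three]
  simp only [nkQ, nkP, nkJ, Prod.smul_mk, Prod.mk_sub_mk, Prod.mk.injEq, mul_add, mul_sub,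
    mul_neg, mul_smul_comm, ← mul_assoc, mul_inv_mul_mul_inv_self hp hq,
    mul_inv_mul_mul_inv_self hq hp, one_mul]
  constructor <;> module

lemma nkQ_nkQ (Z : Quaternion ℝ × Quaternion ℝ) : nkQ (nkQ Z) = Z :=
  Prod.ext (neg_neg Z.1) rfl

theorem stmt_12 (p q : Quaternion ℝ) (hp : ‖p‖ = 1) (hq : ‖q‖ = 1)
    (Z : Quaternion ℝ × Quaternion ℝ) :
    nkQ Z = (Real.sqrt 3)⁻¹ • (2 • nkP p q (nkJ p q Z) - nkJ p q Z) ∧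
    nkQ (nkQ Z) = Z := by
  have hp0 : p ≠ 0 := norm_ne_zero_iff.mp (hp ▸ one_ne_zero)
  have hq0 : q ≠ 0 := norm_ne_zero_iff.mp (hq ▸ one_ne_zero)
  refine ⟨?_, nkQ_nkQ Z⟩
  rw [two_smul_nkP_nkJ_sub_nkJ hp0 hq0, smul_smul,
    inv_mul_cancel₀ (Real.sqrt_ne_zero'.mpr three_pos), one_smul]
end
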